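/- The row transfer matrices commute: H(x)H(x') = H(x')H(x) for all values of the spectral parameters x, x', where H(x) = A(x) + qD(x) and A, D are the diagonal entries of the monodromy matrix M(x|t) built from the 5-vertex L-operator L(x|t_j), whose operator entries satisfy the RLL Yang–Baxter relation with the R-matrix having entries a=1, b=0, c=1, c'=1+β(x'⊖x), b'=x'⊖x, a'=1. -/

import Mathlib

/-- Projection at site `j` onto spin value `b` (`false ↔ v₀`, `true ↔ v₁`) in
the quantum space `(ℂ²)^{⊗N}`, realised on the basis indexed by `Fin N → Bool`. -/
def siteProj11 {K : Type*} [Field K] {N : ℕ} (j : Fin N) (b : Bool) :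
    Matrix (Fin N → Bool) (Fin N → Bool) K :=
  Matrix.of fun r c => if r = c ∧ c j = b then 1 else 0

/-- The operator `σ⁺` at site `j` (`v₀ ↦ v₁`). -/
def siteRaise11 {K : Type*} [Field K] {N : ℕ} (j : Fin N) :
    Matrix (Fin N → Bool) (Fin N → Bool) K :=
  Matrix.of fun r c => if c j = false ∧ r = Function.update c j true then 1 else 0

/-- The operator `σ⁻` at site `j` (`v₁ ↦ v₀`). -/
def siteLower11 {K : Type*} [Field K] {N : ℕ} (j : Fin N) :
    Matrix (Fin N → Bool) (Fin N → Bool) K :=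
  Matrix.of fun r c => if c j = true ∧ r = Function.update c j false then 1 else 0

/-- The five-vertex `L`-operator at site `j`,
`L(x|t_j) = [[σ⁺σ⁻ + (x⊖t_j) σ⁻σ⁺, (1+β(x⊖t_j)) σ⁺],[σ⁻, σ⁻σ⁺]]`, viewed as a
2×2 matrix over the auxiliary-space index with entries in `End((ℂ²)^{⊗N})`,
where `x ⊖ t = (x-t)/(1+βt)`. -/
noncomputable def Lop11 {K : Type*} [Field K] {N : ℕ} (β x : K) (t : Fin N → K)
    (j : Fin N) : Matrix Bool Bool (Matrix (Fin N → Bool) (Fin N → Bool) K) :=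
  Matrix.of fun a b =>
    match a, b with
    | false, false => siteProj11 j true + ((x - t j) / (1 + β * t j)) • siteProj11 j false
    | false, true => (1 + β * ((x - t j) / (1 + β * t j))) • siteRaise11 j
    | true, false => siteLower11 j
    | true, true => siteProj11 j false

/-- The monodromy matrix `M(x|t) = L_N(x|t_N) ⋯ L_2(x|t_2) L_1(x|t_1)`. -/
noncomputable def monodromy11 {K : Type*} [Field K] {N : ℕ} (β x : K) (t : Fin N → K) :
    Matrix Bool Bool (Matrix (Fin N → Bool) (Fin N → Bool) K) :=
  ((List.ofFn fun j : Fin N => Lop11 β x t j).reverse).prod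

/-- The row-to-row transfer matrix `H(x) = A(x) + q D(x)`, where `A` and `D` are
the diagonal entries of the monodromy matrix. -/
noncomputable def transferH11 {K : Type*} [Field K] {N : ℕ} (β q x : K) (t : Fin N → K) :
    Matrix (Fin N → Bool) (Fin N → Bool) K :=
  monodromy11 β x t false false + q • monodromy11 β x t true true


section SiteOp

variable {K : Type*} [Field K] {N : ℕ}

/-- A generic single-site operator at site `j` given by a 2×2 symbol `g`. -/
def siteOpX (j : Fin N) (g : Bool → Bool → K) :
    Matrix (Fin N → Bool) (Fin N → Bool) K :=
  Matrix.of fun r c => if r = Function.update c j (r j) then g (r j) (c j) else 0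

lemma siteOpX_apply_update_right (j : Fin N) (g : Bool → Bool → K) (r c : Fin N → Bool)
    (s : Bool) (hrc : r = Function.update c j (r j)) :
    siteOpX j g r (Function.update c j s) = g (r j) s := by
  simp only [siteOpX, Matrix.of_apply, Function.update_idem, Function.update_self]
  rw [if_pos hrc]

lemma siteOpX_apply_update_left (j : Fin N) (g : Bool → Bool → K) (c : Fin N → Bool)
    (s : Bool) :
    siteOpX j g (Function.update c j s) c = g s (c j) := by
  simp [siteOpX, Function.update_idem]

lemma update_ne_update (j : Fin N) (c : Fin N → Bool) :
    Function.update c j false ≠ Function.update c j true := by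
  intro hE
  have := congrFun hE j
  simp [Function.update_self] at this

lemma siteOpX_mul (j : Fin N) (g h : Bool → Bool → K) :
    siteOpX j g * siteOpX j h
      = siteOpX j (fun a c => g a false * h false c + g a true * h true c) := by
  ext r c
  rw [Matrix.mul_apply]
  by_cases hrc : r = Function.update c j (r j)
  · have key : ∀ m : Fin N → Bool,
        (siteOpX (K := K) j g r m) * (siteOpX j h m c)
          = (if m = Function.update c j false then g (r j) false * h false (c j) else 0)
            + (if m = Function.update c j true then g (r j) true * h true (c j) else 0) := by
      intro m
      by_cases hm : m = Function.update c j (m j)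
      · rcases hmj : m j with _ | _
        · have hm2 : m = Function.update c j false := by rw [hm, hmj]
          subst hm2
          rw [siteOpX_apply_update_right j g r c false hrc,
            siteOpX_apply_update_left j h c false,
            if_pos rfl, if_neg (update_ne_update j c), add_zero]
        · have hm2 : m = Function.update c j true := by rw [hm, hmj]
          subst hm2
          rw [siteOpX_apply_update_right j g r c true hrc,
            siteOpX_apply_update_left j h c true,
            if_pos rfl, if_neg (update_ne_update j c).symm, zero_add]
      · have hf : m ≠ Function.update c j false := by
          intro hE; exact hm (by rw [hE, Function.update_self])
        have htr : m ≠ Function.update c j true := by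
          intro hE; exact hm (by rw [hE, Function.update_self])
        have hz : siteOpX (K := K) j h m c = 0 := by
          simp [siteOpX, hm]
        rw [hz, mul_zero, if_neg hf, if_neg htr, add_zero]
    rw [Finset.sum_congr rfl fun m _ => key m, Finset.sum_add_distrib,
      Finset.sum_ite_eq' Finset.univ, Finset.sum_ite_eq' Finset.univ]
    simp only [Finset.mem_univ, if_true]
    simp only [siteOpX, Matrix.of_apply]
    rw [if_pos hrc]
  · rw [Finset.sum_eq_zero, siteOpX, Matrix.of_apply, if_neg hrc]
    intro m _
    by_cases hm : m = Function.update c j (m j)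
    · have hne : ¬ r = Function.update m j (r j) := by
        intro hE
        apply hrc
        rw [hm, Function.update_idem] at hE
        exact hE
      have hz : siteOpX (K := K) j g r m = 0 := by
        simp [siteOpX, hne]
      rw [hz, zero_mul]
    · have hz : siteOpX (K := K) j h m c = 0 := by
        simp [siteOpX, hm]
      rw [hz, mul_zero]

lemma siteOpX_mul_ne {i j : Fin N} (hij : i ≠ j) (g h : Bool → Bool → K) :
    siteOpX i g * siteOpX j h
      = Matrix.of fun r c =>
          if Function.update r i (c i) = Function.update c j (r j)
          then g (r i) (c i) * h (r j) (c j) else 0 := by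
  ext r c
  rw [Matrix.mul_apply]
  simp only [Matrix.of_apply]
  rw [Finset.sum_eq_single (Function.update r i (c i))]
  · have hj : (Function.update r i (c i) : Fin N → Bool) j = r j :=
      Function.update_of_ne (Ne.symm hij) _ _
    have hi : (Function.update r i (c i) : Fin N → Bool) i = c i :=
      Function.update_self _ _ _
    have hfirst : r = Function.update (Function.update r i (c i)) i (r i) := by
      rw [Function.update_idem, Function.update_eq_self]
    by_cases hcond : Function.update r i (c i) = Function.update c j (r j)
    · rw [if_pos hcond]
      have hsecond : Function.update r i (c i)
          = Function.update c j ((Function.update r i (c i)) j) := by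
        rw [hj]; exact hcond
      have e1 : siteOpX (K := K) i g r (Function.update r i (c i)) = g (r i) (c i) := by
        simp only [siteOpX, Matrix.of_apply, hi]
        rw [if_pos hfirst]
      have e2 : siteOpX (K := K) j h (Function.update r i (c i)) c = h (r j) (c j) := by
        simp only [siteOpX, Matrix.of_apply, hj]
        rw [if_pos hcond]
      rw [e1, e2]
    · rw [if_neg hcond]
      have e2 : siteOpX (K := K) j h (Function.update r i (c i)) c = 0 := by
        simp only [siteOpX, Matrix.of_apply]
        rw [if_neg (by rw [hj]; exact hcond : ¬ _)]
      rw [e2, mul_zero]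
  · intro m _ hm
    by_cases h2 : m = Function.update c j (m j)
    · by_cases h1 : r = Function.update m i (r i)
      · exfalso
        apply hm
        funext k
        by_cases hk : k = i
        · subst hk
          have hmi : m k = c k := by
            have := congrFun h2 k
            rwa [Function.update_of_ne hij] at this
          rw [Function.update_self, hmi]
        · have : r k = m k := by
            have := congrFun h1 k
            rwa [Function.update_of_ne hk] at this
          rw [Function.update_of_ne hk, ← this]
      · have hz : siteOpX (K := K) i g r m = 0 := by
          simp [siteOpX, h1]
        rw [hz, zero_mul]
    · have hz : siteOpX (K := K) j h m c = 0 := by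
        simp [siteOpX, h2]
      rw [hz, mul_zero]
  · intro h0
    exact absurd (Finset.mem_univ _) h0

lemma update_eq_iff_off {i j : Fin N} (hij : i ≠ j) (r c : Fin N → Bool) :
    Function.update r i (c i) = Function.update c j (r j)
      ↔ ∀ k, k ≠ i → k ≠ j → r k = c k := by
  constructor
  · intro h k hki hkj
    have := congrFun h k
    rwa [Function.update_of_ne hki, Function.update_of_ne hkj] at this
  · intro h
    funext k
    rcases eq_or_ne k i with rfl | hki
    · rw [Function.update_self, Function.update_of_ne hij]
    · rw [Function.update_of_ne hki]
      rcases eq_or_ne k j with rfl | hkj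
      · rw [Function.update_self]
      · rw [Function.update_of_ne hkj]; exact h k hki hkj

lemma update_swap_cond {i j : Fin N} (hij : i ≠ j) (r c : Fin N → Bool) :
    (Function.update r i (c i) = Function.update c j (r j))
      ↔ (Function.update r j (c j) = Function.update c i (r i)) := by
  rw [update_eq_iff_off hij, update_eq_iff_off hij.symm]
  exact ⟨fun h k h1 h2 => h k h2 h1, fun h k h1 h2 => h k h2 h1⟩

lemma siteOpX_comm {i j : Fin N} (hij : i ≠ j) (g h : Bool → Bool → K) :
    siteOpX i g * siteOpX j h = siteOpX j h * siteOpX i g := by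
  rw [siteOpX_mul_ne hij, siteOpX_mul_ne hij.symm]
  ext r c
  simp only [Matrix.of_apply]
  by_cases hc : Function.update r i (c i) = Function.update c j (r j)
  · rw [if_pos hc, if_pos ((update_swap_cond hij r c).mp hc)]
    ring
  · rw [if_neg hc, if_neg (fun hE => hc ((update_swap_cond hij r c).mpr hE))]

end SiteOp

section Symbols

variable {K : Type*} [Field K] {N : ℕ}

lemma siteProj11_eq (j : Fin N) (b : Bool) :
    (siteProj11 j b : Matrix (Fin N → Bool) (Fin N → Bool) K)
      = siteOpX j (fun a c => if a = c ∧ a = b then 1 else 0) := by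
  ext r c
  simp only [siteProj11, siteOpX, Matrix.of_apply]
  by_cases h1 : r = c
  · subst h1
    rw [if_pos (Function.update_eq_self j r).symm]
    by_cases hb : r j = b
    · rw [if_pos ⟨rfl, hb⟩, if_pos ⟨rfl, hb⟩]
    · rw [if_neg (fun h => hb h.2), if_neg (fun h => hb h.2)]
  · rw [if_neg (fun h => h1 h.1)]
    by_cases hu : r = Function.update c j (r j)
    · have hne : r j ≠ c j := fun hE => h1 (by rw [hu, hE, Function.update_eq_self])
      rw [if_pos hu, if_neg (fun h => hne h.1)]
    · rw [if_neg hu]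

lemma siteRaise11_eq (j : Fin N) :
    (siteRaise11 j : Matrix (Fin N → Bool) (Fin N → Bool) K)
      = siteOpX j (fun a c => if a = true ∧ c = false then 1 else 0) := by
  ext r c
  simp only [siteRaise11, siteOpX, Matrix.of_apply]
  by_cases hc : c j = false ∧ r = Function.update c j true
  · obtain ⟨hcj, hr⟩ := hc
    have hrj : r j = true := by rw [hr, Function.update_self]
    rw [if_pos ⟨hcj, hr⟩, if_pos (by rw [hrj]; exact hr), if_pos ⟨hrj, hcj⟩]
  · rw [if_neg hc]
    by_cases hu : r = Function.update c j (r j)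
    · rw [if_pos hu, if_neg (fun h => hc ⟨h.2, by rw [← h.1]; exact hu⟩)]
    · rw [if_neg hu]

lemma siteLower11_eq (j : Fin N) :
    (siteLower11 j : Matrix (Fin N → Bool) (Fin N → Bool) K)
      = siteOpX j (fun a c => if a = false ∧ c = true then 1 else 0) := by
  ext r c
  simp only [siteLower11, siteOpX, Matrix.of_apply]
  by_cases hc : c j = true ∧ r = Function.update c j false
  · obtain ⟨hcj, hr⟩ := hc
    have hrj : r j = false := by rw [hr, Function.update_self]
    rw [if_pos ⟨hcj, hr⟩, if_pos (by rw [hrj]; exact hr), if_pos ⟨hrj, hcj⟩]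
  · rw [if_neg hc]
    by_cases hu : r = Function.update c j (r j)
    · rw [if_pos hu, if_neg (fun h => hc ⟨h.2, by rw [← h.1]; exact hu⟩)]
    · rw [if_neg hu]

lemma siteOpX_add (j : Fin N) (g h : Bool → Bool → K) :
    siteOpX j (fun a c => g a c + h a c) = siteOpX j g + siteOpX j h := by
  ext r c
  simp only [siteOpX, Matrix.add_apply, Matrix.of_apply]
  split <;> simp

lemma siteOpX_smul (j : Fin N) (s : K) (g : Bool → Bool → K) :
    siteOpX j (fun a c => s * g a c) = s • siteOpX j g := by
  ext r c
  simp only [siteOpX, Matrix.smul_apply, Matrix.of_apply]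
  split <;> simp

lemma siteOpX_sum {ι : Type*} (s : Finset ι) (j : Fin N) (G : ι → Bool → Bool → K) :
    ∑ i ∈ s, siteOpX j (G i) = siteOpX j (fun a c => ∑ i ∈ s, G i a c) := by
  ext r c
  rw [Matrix.sum_apply]
  simp only [siteOpX, Matrix.of_apply]
  split <;> simp

/-- The symbol of the entries of the `L`-operator. -/
def ellSym (β x τ : K) : Bool → Bool → Bool → Bool → K
  | false, false => fun a c => if a = c then (if a = true then 1 else (x - τ) / (1 + β * τ)) else 0
  | false, true => fun a c => if a = true ∧ c = false then 1 + β * ((x - τ) / (1 + β * τ)) else 0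
  | true, false => fun a c => if a = false ∧ c = true then 1 else 0
  | true, true => fun a c => if a = false ∧ c = false then 1 else 0

lemma Lop11_eq (β x : K) (t : Fin N → K) (j : Fin N) (p q : Bool) :
    Lop11 β x t j p q = siteOpX j (ellSym β x (t j) p q) := by
  cases p <;> cases q
  · rw [show Lop11 β x t j false false
        = siteProj11 j true + ((x - t j) / (1 + β * t j)) • siteProj11 j false from rfl,
      siteProj11_eq, siteProj11_eq, ← siteOpX_smul, ← siteOpX_add]
    exact congrArg (siteOpX j) (by funext a c; cases a <;> cases c <;> simp [ellSym])
  · rw [show Lop11 β x t j false true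
        = (1 + β * ((x - t j) / (1 + β * t j))) • siteRaise11 j from rfl,
      siteRaise11_eq, ← siteOpX_smul]
    exact congrArg (siteOpX j) (by funext a c; cases a <;> cases c <;> simp [ellSym])
  · rw [show Lop11 β x t j true false = siteLower11 j from rfl, siteLower11_eq]
    exact congrArg (siteOpX j) (by funext a c; cases a <;> cases c <;> simp [ellSym])
  · rw [show Lop11 β x t j true true = siteProj11 j false from rfl, siteProj11_eq]
    exact congrArg (siteOpX j) (by funext a c; cases a <;> cases c <;> simp [ellSym])

/-- The scalar `R`-matrix. -/
def rSym (β x x' : K) : Bool × Bool → Bool × Bool → K := fun p q =>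
  match p, q with
  | (false, false), (false, false) => 1
  | (false, true), (false, true) => 1 + β * ((x' - x) / (1 + β * x))
  | (false, true), (true, false) => (x' - x) / (1 + β * x)
  | (true, false), (true, false) => 1
  | (true, true), (true, true) => 1
  | _, _ => 0

set_option maxHeartbeats 1000000 in
lemma rll_sym (β x x' τ : K) (hτ : 1 + β * τ ≠ 0) (hx : 1 + β * x ≠ 0)
    (p q : Bool × Bool) (a c : Bool) :
    ∑ k : Bool × Bool, rSym β x x' p k *
      (ellSym β x τ k.1 q.1 a false * ellSym β x' τ k.2 q.2 false c
       + ellSym β x τ k.1 q.1 a true * ellSym β x' τ k.2 q.2 true c)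
    = ∑ k : Bool × Bool, rSym β x x' k q *
      (ellSym β x' τ p.1 k.1 a false * ellSym β x τ p.2 k.2 false c
       + ellSym β x' τ p.1 k.1 a true * ellSym β x τ p.2 k.2 true c) := by
  obtain ⟨p1, p2⟩ := p
  obtain ⟨q1, q2⟩ := q
  have hx' : 1 + x * β ≠ 0 := by rwa [mul_comm]
  have hτ' : 1 + τ * β ≠ 0 := by rwa [mul_comm]
  cases p1 <;> cases p2 <;> cases q1 <;> cases q2 <;> cases a <;> cases c <;>
    · simp only [Fintype.sum_prod_type, Fintype.sum_bool, rSym, ellSym]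
      norm_num
      try field_simp
      try ring

end Symbols

section YBE

variable {K : Type*} [Field K] {N : ℕ}

/-- Tensor product over the two auxiliary spaces. -/
def kron2 {α : Type*} [Mul α] (M M' : Matrix Bool Bool α) :
    Matrix (Bool × Bool) (Bool × Bool) α :=
  Matrix.of fun p q => M p.1 q.1 * M' p.2 q.2

/-- The `R`-matrix as a matrix of scalar quantum operators. -/
noncomputable def rMatS (β x x' : K) (N : ℕ) :
    Matrix (Bool × Bool) (Bool × Bool) (Matrix (Fin N → Bool) (Fin N → Bool) K) :=
  Matrix.of fun p q => rSym β x x' p q • (1 : Matrix (Fin N → Bool) (Fin N → Bool) K)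

lemma rll_site (β x x' : K) (t : Fin N → K) (j : Fin N)
    (hτ : 1 + β * t j ≠ 0) (hx : 1 + β * x ≠ 0) :
    rMatS β x x' N * kron2 (Lop11 β x t j) (Lop11 β x' t j)
      = kron2 (Lop11 β x' t j) (Lop11 β x t j) * rMatS β x x' N := by
  refine Matrix.ext fun p q => ?_
  rw [Matrix.mul_apply, Matrix.mul_apply]
  simp only [kron2, rMatS, Matrix.of_apply, smul_mul_assoc, one_mul, mul_smul_comm, mul_one]
  simp only [Lop11_eq, siteOpX_mul]
  simp only [← siteOpX_smul]
  rw [siteOpX_sum, siteOpX_sum]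
  refine congrArg (siteOpX j) (funext fun a => funext fun c => ?_)
  exact rll_sym β x x' (t j) hτ hx p q a c

lemma entries_commute_mul {A B : Matrix Bool Bool (Matrix (Fin N → Bool) (Fin N → Bool) K)}
    {s : Matrix (Fin N → Bool) (Fin N → Bool) K}
    (hA : ∀ p q, Commute (A p q) s) (hB : ∀ p q, Commute (B p q) s) :
    ∀ p q, Commute ((A * B) p q) s := by
  intro p q
  rw [Matrix.mul_apply]
  exact Commute.sum_left _ _ _ fun k _ => (hA p k).mul_left (hB k q)

lemma prod_entries_commute (β x x' : K) (t : Fin N → K) (j : Fin N)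
    (l : List (Fin N)) (hl : j ∉ l) :
    ∀ p q a b, Commute (((l.map (Lop11 β x t)).prod) p q) (Lop11 β x' t j a b) := by
  induction l with
  | nil =>
      intro p q a b
      rw [List.map_nil, List.prod_nil, Matrix.one_apply]
      split
      · exact Commute.one_left _
      · exact Commute.zero_left _
  | cons i l ih =>
      intro p q a b
      have hij : i ≠ j := fun hE => hl (hE ▸ List.mem_cons_self (a := i) (l := l))
      have hjl : j ∉ l := fun hE => hl (List.mem_cons_of_mem i hE)
      rw [List.map_cons, List.prod_cons]
      refine entries_commute_mul (fun p q => ?_) (fun p q => ih hjl p q a b) p q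
      rw [Lop11_eq, Lop11_eq]
      exact siteOpX_comm hij _ _

lemma kron2_mul {α : Type*} [Ring α] (A B C D : Matrix Bool Bool α)
    (hcom : ∀ p q a b, Commute (B p q) (C a b)) :
    kron2 (A * B) (C * D) = kron2 A C * kron2 B D := by
  refine Matrix.ext fun p q => ?_
  simp only [kron2, Matrix.of_apply, Matrix.mul_apply]
  rw [Finset.sum_mul_sum, Fintype.sum_prod_type]
  refine Finset.sum_congr rfl fun e _ => Finset.sum_congr rfl fun f _ => ?_
  exact (hcom e q.1 p.2 f).mul_mul_mul_comm _ _

lemma kron2_one {α : Type*} [Ring α] :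
    kron2 (1 : Matrix Bool Bool α) 1 = 1 := by
  refine Matrix.ext fun p q => ?_
  obtain ⟨p1, p2⟩ := p
  obtain ⟨q1, q2⟩ := q
  simp only [kron2, Matrix.of_apply, Matrix.one_apply, Prod.mk.injEq]
  by_cases h1 : p1 = q1 <;> by_cases h2 : p2 = q2 <;> simp [h1, h2]

lemma ybe_list (β x x' : K) (t : Fin N → K) (hx : 1 + β * x ≠ 0)
    (ht : ∀ j, 1 + β * t j ≠ 0) (l : List (Fin N)) (hl : l.Nodup) :
    rMatS β x x' N * kron2 ((l.map (Lop11 β x t)).prod) ((l.map (Lop11 β x' t)).prod)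
      = kron2 ((l.map (Lop11 β x' t)).prod) ((l.map (Lop11 β x t)).prod) * rMatS β x x' N := by
  induction l with
  | nil =>
      simp only [List.map_nil, List.prod_nil, kron2_one, mul_one, one_mul]
  | cons j l ih =>
      obtain ⟨hjl, hnd⟩ := List.nodup_cons.mp hl
      rw [List.map_cons, List.prod_cons, List.map_cons, List.prod_cons,
        kron2_mul _ _ _ _ (fun p q a b => prod_entries_commute β x x' t j l hjl p q a b),
        kron2_mul _ _ _ _ (fun p q a b => prod_entries_commute β x' x t j l hjl p q a b),
        ← mul_assoc, rll_site β x x' t j (ht j) hx, mul_assoc, ih hnd, ← mul_assoc]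
  
lemma monodromy11_eq_prod (β x : K) (t : Fin N → K) :
    monodromy11 β x t = (((List.finRange N).reverse).map (Lop11 β x t)).prod := by
  rw [monodromy11, List.ofFn_eq_map, List.map_reverse]

lemma ybe_monodromy (β x x' : K) (t : Fin N → K) (hx : 1 + β * x ≠ 0)
    (ht : ∀ j, 1 + β * t j ≠ 0) :
    rMatS β x x' N * kron2 (monodromy11 β x t) (monodromy11 β x' t)
      = kron2 (monodromy11 β x' t) (monodromy11 β x t) * rMatS β x x' N := by
  rw [monodromy11_eq_prod, monodromy11_eq_prod]
  exact ybe_list β x x' t hx ht _ (List.nodup_reverse.mpr (List.nodup_finRange N))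

end YBE

/-- The row transfer matrices commute: `H(x) H(x') = H(x') H(x)` for all values
of the spectral parameters. -/
theorem transfer_matrices_commute {K : Type*} [Field K] {N : ℕ} (β q x x' : K)
    (t : Fin N → K) (ht : ∀ j, 1 + β * t j ≠ 0)
    (h1 : 1 + β * x ≠ 0) (h2 : 1 + β * x' ≠ 0) :
    transferH11 β q x t * transferH11 β q x' t
      = transferH11 β q x' t * transferH11 β q x t := by
  classical
  have hY := ybe_monodromy β x x' t h1 ht
  have key : ∀ p r : Bool × Bool,
      ∑ k : Bool × Bool, rSym β x x' p k •
        (kron2 (monodromy11 β x t) (monodromy11 β x' t)) k r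
      = ∑ k : Bool × Bool, rSym β x x' k r •
        (kron2 (monodromy11 β x' t) (monodromy11 β x t)) p k := by
    intro p r
    have h' : (rMatS β x x' N * kron2 (monodromy11 β x t) (monodromy11 β x' t)) p r
        = (kron2 (monodromy11 β x' t) (monodromy11 β x t) * rMatS β x x' N) p r := by
      rw [hY]
    rw [Matrix.mul_apply, Matrix.mul_apply] at h'
    simpa only [rMatS, Matrix.of_apply, smul_mul_assoc, one_mul, mul_smul_comm, mul_one]
      using h'
  -- abbreviations
  set A := monodromy11 β x t false false with hA
  set D := monodromy11 β x t true true with hD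
  set A' := monodromy11 β x' t false false with hA'
  set D' := monodromy11 β x' t true true with hD'
  set W := monodromy11 β x t true false * monodromy11 β x' t false true with hW
  set V := monodromy11 β x' t true false * monodromy11 β x t false true with hV
  set b' : K := (x' - x) / (1 + β * x) with hb'
  have hc' : (1 : K) + β * b' ≠ 0 := by
    have hkey : (1 + β * x) * (1 + β * b') = 1 + β * x' := by
      rw [hb']; field_simp; ring
    intro h0
    rw [h0, mul_zero] at hkey
    exact h2 hkey.symm
  -- the entry identities coming from the Yang–Baxter equation
  have e00 := key (false, false) (false, false)
  have e11 := key (false, true) (false, true)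
  have e21 := key (true, false) (false, true)
  have e22 := key (true, false) (true, false)
  have e33 := key (true, true) (true, true)
  simp only [Fintype.sum_prod_type, Fintype.sum_bool, rSym, kron2, Matrix.of_apply,
    one_smul, zero_smul, add_zero, zero_add, ← hA, ← hD, ← hA', ← hD', ← hW, ← hV, ← hb']
    at e00 e11 e21 e22 e33
  -- e00 : A * A' = A' * A
  -- e11 : b' • W + (1 + β * b') • (A * D') = (1 + β * b') • (A' * D)
  -- e21 : W = (1 + β * b') • V
  -- e22 : D * A' = D' * A + b' • V
  -- e33 : D * D' = D' * D
  have hfst : A * D' = A' * D - b' • V := by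
    have h6 : ((1 : K) + β * b') • (A * D')
        = ((1 : K) + β * b') • (A' * D - b' • V) := by
      rw [smul_sub, eq_sub_iff_add_eq]
      calc ((1 : K) + β * b') • (A * D') + ((1 : K) + β * b') • (b' • V)
          = ((1 : K) + β * b') • (A * D') + b' • (((1 : K) + β * b') • V) := by
            rw [smul_comm]
        _ = ((1 : K) + β * b') • (A * D') + b' • W := by rw [← e21]
        _ = ((1 : K) + β * b') • (A' * D) := by rw [add_comm]; exact e11
    have h7 := congrArg
      (fun z : Matrix (Fin N → Bool) (Fin N → Bool) K => ((1 : K) + β * b')⁻¹ • z) h6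
    simpa only [smul_smul, inv_mul_cancel₀ hc', one_smul] using h7
  have cross : A * D' + D * A' = A' * D + D' * A := by
    rw [hfst, e22]
    abel
  -- expand the transfer matrices and conclude
  simp only [transferH11, ← hA, ← hD, ← hA', ← hD']
  calc (A + q • D) * (A' + q • D')
      = A * A' + (q • (A * D') + q • (D * A')) + (q * q) • (D * D') := by
        simp only [add_mul, mul_add, smul_mul_assoc, mul_smul_comm, smul_smul, smul_add]
        abel
    _ = A' * A + (q • (A' * D) + q • (D' * A)) + (q * q) • (D' * D) := by
        rw [e00, e33, ← smul_add, ← smul_add, cross]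
    _ = (A' + q • D') * (A + q • D) := by
        simp only [add_mul, mul_add, smul_mul_assoc, mul_smul_comm, smul_smul, smul_add]
        abel
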